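/- arXiv:1906.03571 — 3 statements merged into one kernel-verified Lean document; each statement's English description precedes it below -/
import Mathlib

section
/- Let 0 < k ≤ 1 and 0 ≤ β ≤ 2 be real numbers, and let c, a₁,…,a_{N-1} ≥ 0 be nonnegative reals such that c² ≤ a₁² + ⋯ + a_{N-1}² and, setting c_i² = a_{i+1}² + ⋯ + a_{N-1}², assume k·a_i² ≥ c_i² for all i = 1,…,N-2. Then, with h = ((1+k)^{β/2} - 1)/k^{β/2}, we have c^β ≤ a₁^β + h·a₂^β + h²·a₃^β + ⋯ + h^{N-2}·a_{N-1}^β. -/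
/-!
Put `x i = a i ^ 2` and `p = β / 2 ≤ 1`. If `0 ≤ s ≤ k x`, concavity of `t ↦ t ^ p` gives
`(x + s) ^ p ≤ x ^ p + h s ^ p`. Applied with `x = a₁²` and `s` the tail sum `∑_{j > 1} aⱼ²`,
this peels off the first term at the cost of a factor `h` on the tail, and induction on the number of
terms finishes the proof.
-/

open Finset

theorem ConcaveOn.map_add_sub_map_le_of_le {s : Set ℝ} {f : ℝ → ℝ} (hf : ConcaveOn ℝ s f)
    {a b d : ℝ} (ha : a ∈ s) (hbd : b + d ∈ s) (hab : a ≤ b) (hd : 0 ≤ d) :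
    f (b + d) - f b ≤ f (a + d) - f a := by
  rcases (show a ≤ b + d by linarith).eq_or_lt with hdeg | hlt
  · obtain rfl : d = 0 := by linarith
    obtain rfl : b = a := by linarith
    simp
  -- `a + d` and `b` are the two convex combinations of `a` and `b + d` with swapped weights
  set L := b + d - a
  have hL : 0 < L := by linarith
  have hw₁ : 0 ≤ (b - a) / L := div_nonneg (by linarith) hL.le
  have hw₂ : 0 ≤ d / L := div_nonneg hd hL.le
  have hsum : (b - a) / L + d / L = 1 := by field_simp; ring
  have h₁ := hf.2 ha hbd hw₁ hw₂ hsum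
  have h₂ := hf.2 ha hbd hw₂ hw₁ (by linarith)
  simp only [smul_eq_mul] at h₁ h₂
  rw [show (b - a) / L * a + d / L * (b + d) = a + d by field_simp; ring] at h₁
  rw [show d / L * a + (b - a) / L * (b + d) = b by field_simp; ring] at h₂
  linear_combination h₁ + h₂ - (f a + f (b + d)) * hsum

namespace Real

variable {p k : ℝ}

theorem rpow_add_le_of_le_mul (hp₀ : 0 ≤ p) (hp₁ : p ≤ 1) (hk : 0 < k) {x s : ℝ} (hs : 0 ≤ s)
    (hsx : s ≤ k * x) : (x + s) ^ p ≤ x ^ p + ((1 + k) ^ p - 1) / k ^ p * s ^ p := by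
  have hx : 0 ≤ x := by nlinarith
  -- the increment of `t ↦ t ^ p` over `[k x, k x + k s]` is at most the one over `[s, s + k s]`
  have hinc := (concaveOn_rpow hp₀ hp₁).map_add_sub_map_le_of_le (a := s) (b := k * x)
    (d := k * s) hs (by positivity : (0 : ℝ) ≤ k * x + k * s) hsx (by positivity)
  rw [← mul_add, show s + k * s = s * (1 + k) by ring, mul_rpow hk.le (by positivity),
    mul_rpow hk.le hx, mul_rpow hs (by positivity)] at hinc
  rw [div_mul_eq_mul_div, ← sub_le_iff_le_add', le_div_iff₀ (rpow_pos_of_pos hk p)]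
  linear_combination hinc

theorem one_add_rpow_sub_one_div_rpow_nonneg (hp : 0 ≤ p) (hk : 0 < k) :
    0 ≤ ((1 + k) ^ p - 1) / k ^ p :=
  div_nonneg (sub_nonneg.2 (one_le_rpow (by linarith) hp)) (rpow_nonneg hk.le p)

theorem rpow_sum_Icc_le_sum_pow_mul_rpow (hp₀ : 0 ≤ p) (hp₁ : p ≤ 1) (hk : 0 < k) {x : ℕ → ℝ}
    {m n : ℕ} (hmn : m ≤ n) (hx : ∀ i ∈ Icc m n, 0 ≤ x i)
    (htail : ∀ i ∈ Icc m n, ∑ j ∈ Icc (i + 1) n, x j ≤ k * x i) :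
    (∑ i ∈ Icc m n, x i) ^ p ≤
      ∑ i ∈ Icc m n, (((1 + k) ^ p - 1) / k ^ p) ^ (i - m) * x i ^ p := by
  set h := ((1 + k) ^ p - 1) / k ^ p
  induction hd : n - m generalizing m with
  | zero =>
    obtain rfl : m = n := by omega
    simp
  | succ d ih =>
    have hm : m ∈ Icc m n := mem_Icc.2 ⟨le_rfl, hmn⟩
    have hsub : Icc (m + 1) n ⊆ Icc m n := Icc_subset_Icc_left m.le_succ
    set S := ∑ i ∈ Icc (m + 1) n, x i
    have hS : 0 ≤ S := sum_nonneg fun i hi => hx i (hsub hi)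
    have hSx : S ≤ k * x m := htail m hm
    have ih' : S ^ p ≤ ∑ i ∈ Icc (m + 1) n, h ^ (i - (m + 1)) * x i ^ p :=
      ih (by omega) (fun i hi => hx i (hsub hi)) (fun i hi => htail i (hsub hi)) (by omega)
    have hh : 0 ≤ h := one_add_rpow_sub_one_div_rpow_nonneg hp₀ hk
    have hshift : ∑ i ∈ Icc (m + 1) n, h ^ (i - m) * x i ^ p =
        h * ∑ i ∈ Icc (m + 1) n, h ^ (i - (m + 1)) * x i ^ p := by
      rw [mul_sum]
      refine sum_congr rfl fun i hi => ?_
      rw [← mul_assoc, ← pow_succ', show i - (m + 1) + 1 = i - m by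
        have := (mem_Icc.1 hi).1; omega]
    rw [← add_sum_Ioc_eq_sum_Icc hmn, ← add_sum_Ioc_eq_sum_Icc hmn, ← Icc_add_one_left_eq_Ioc,
      Nat.sub_self, pow_zero, one_mul, hshift]
    calc (x m + S) ^ p ≤ x m ^ p + h * S ^ p := rpow_add_le_of_le_mul hp₀ hp₁ hk hS hSx
      _ ≤ _ := add_le_add_right (mul_le_mul_of_nonneg_left ih' hh) _

end Real

theorem stmt_8_general (k β : ℝ) (hk0 : 0 < k) (hβ0 : 0 ≤ β) (hβ2 : β ≤ 2)
    (N : ℕ) (hN : 2 ≤ N) (c : ℝ) (a : ℕ → ℝ)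
    (hc : 0 ≤ c) (ha : ∀ i ∈ Finset.Icc 1 (N - 1), 0 ≤ a i)
    (hpoly : c ^ 2 ≤ ∑ i ∈ Finset.Icc 1 (N - 1), (a i) ^ 2)
    (hcond : ∀ i ∈ Finset.Icc 1 (N - 2),
      k * (a i) ^ 2 ≥ ∑ j ∈ Finset.Icc (i + 1) (N - 1), (a j) ^ 2) :
    c ^ β ≤ ∑ i ∈ Finset.Icc 1 (N - 1),
      (((1 + k) ^ (β / 2) - 1) / k ^ (β / 2)) ^ (i - 1) * (a i) ^ β := by
  have hp₀ : 0 ≤ β / 2 := by linarith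
  have hp₁ : β / 2 ≤ 1 := by linarith
  have hsq {t : ℝ} (ht : 0 ≤ t) : (t ^ 2) ^ (β / 2) = t ^ β := by
    rw [← Real.rpow_natCast_mul ht, Nat.cast_ofNat, mul_div_cancel₀ β two_ne_zero]
  have htail : ∀ i ∈ Icc 1 (N - 1), ∑ j ∈ Icc (i + 1) (N - 1), a j ^ 2 ≤ k * a i ^ 2 := by
    intro i hi
    rcases (show i ≤ N - 2 ∨ i = N - 1 by have := (mem_Icc.1 hi).2; omega) with hi' | rfl
    · exact hcond i (mem_Icc.2 ⟨(mem_Icc.1 hi).1, hi'⟩)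
    · rw [Icc_eq_empty (by omega), sum_empty]
      positivity
  calc c ^ β = (c ^ 2) ^ (β / 2) := (hsq hc).symm
    _ ≤ (∑ i ∈ Icc 1 (N - 1), a i ^ 2) ^ (β / 2) := Real.rpow_le_rpow (sq_nonneg c) hpoly hp₀
    _ ≤ ∑ i ∈ Icc 1 (N - 1), (((1 + k) ^ (β / 2) - 1) / k ^ (β / 2)) ^ (i - 1) *
          (a i ^ 2) ^ (β / 2) :=
      Real.rpow_sum_Icc_le_sum_pow_mul_rpow hp₀ hp₁ hk0 (by omega) (fun i _ => sq_nonneg _) htail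
    _ = _ := sum_congr rfl fun i hi => by rw [hsq (ha i hi)]

theorem stmt_8 (k β : ℝ) (hk0 : 0 < k) (hk1 : k ≤ 1) (hβ0 : 0 ≤ β) (hβ2 : β ≤ 2)
    (N : ℕ) (hN : 2 ≤ N) (c : ℝ) (a : ℕ → ℝ)
    (hc : 0 ≤ c) (ha : ∀ i ∈ Finset.Icc 1 (N - 1), 0 ≤ a i)
    (hpoly : c ^ 2 ≤ ∑ i ∈ Finset.Icc 1 (N - 1), (a i) ^ 2)
    (hcond : ∀ i ∈ Finset.Icc 1 (N - 2),
      k * (a i) ^ 2 ≥ ∑ j ∈ Finset.Icc (i + 1) (N - 1), (a j) ^ 2) :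
    c ^ β ≤ ∑ i ∈ Finset.Icc 1 (N - 1),
      (((1 + k) ^ (β / 2) - 1) / k ^ (β / 2)) ^ (i - 1) * (a i) ^ β :=
  stmt_8_general k β hk0 hβ0 hβ2 N hN c a hc ha hpoly hcond
end

section
/- Let 0 < k ≤ 1 and β ≥ 1 be real numbers. Let T, T₁,…,T_{N-1} ≥ 0 satisfy T ≥ T₁ + ⋯ + T_{N-1}, and setting S_i = T_{i+1} + ⋯ + T_{N-1}, assume k·T_i ≥ S_i for all i = 1,…,N-2. Then, with h = ((1+k)^β - 1)/k^β, we have T^β ≥ T₁^β + h·T₂^β + h²·T₃^β + ⋯ + h^{N-2}·T_{N-1}^β. -/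
/-!
For a convex `f`, the increments `f (x + d) - f x` grow with `x`. For `f t = t ^ β`, comparing the
increments at `y` and `k x` with step `k y` gives, after scaling by `k ^ β`, the two-term inequality
`x ^ β + h y ^ β ≤ (x + y) ^ β` for `0 ≤ y ≤ k x`. The hypothesis `k T_i ≥ S_i` lets this be applied
to `T_i` and the tail `S_i = T_{i+1} + ⋯`; peeling off one term at a time, each step contributes
one more factor `h`.
-/

open Finset Real

theorem ConvexOn.map_add_sub_map_le {𝕜 : Type*} [Field 𝕜] [LinearOrder 𝕜] [IsStrictOrderedRing 𝕜]
    {s : Set 𝕜} {f : 𝕜 → 𝕜} (hf : ConvexOn 𝕜 s f) {x y d : 𝕜} (hx : x ∈ s) (hyd : y + d ∈ s)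
    (hxy : x ≤ y) (hd : 0 ≤ d) : f (x + d) - f x ≤ f (y + d) - f y := by
  rcases hd.eq_or_lt with rfl | hd
  · simp
  have hL : 0 < y + d - x := by linarith
  -- Both `x + d` and `y` are convex combinations of `x` and `y + d`, with swapped weights.
  have hw₁ : 0 ≤ d / (y + d - x) := by positivity
  have hw₂ : 0 ≤ (y - x) / (y + d - x) := div_nonneg (by linarith) hL.le
  have hsum : (y - x) / (y + d - x) + d / (y + d - x) = 1 := by
    rw [← add_div, div_eq_one_iff_eq hL.ne']; ring
  have h₁ := hf.2 hx hyd hw₂ hw₁ hsum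
  have h₂ := hf.2 hx hyd hw₁ hw₂ (by rw [add_comm]; exact hsum)
  have e₁ : ((y - x) / (y + d - x)) • x + (d / (y + d - x)) • (y + d) = x + d := by
    simp only [smul_eq_mul]; field_simp; ring
  have e₂ : (d / (y + d - x)) • x + ((y - x) / (y + d - x)) • (y + d) = y := by
    simp only [smul_eq_mul]; field_simp; ring
  rw [e₁, smul_eq_mul, smul_eq_mul] at h₁
  rw [e₂, smul_eq_mul, smul_eq_mul] at h₂
  linear_combination h₁ + h₂ + (f x + f (y + d)) * hsum

noncomputable def monogamyFactor (k β : ℝ) : ℝ := ((1 + k) ^ β - 1) / k ^ β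

section

variable {k β : ℝ}

theorem monogamyFactor_nonneg (hk : 0 < k) (hβ : 0 ≤ β) : 0 ≤ monogamyFactor k β :=
  div_nonneg (sub_nonneg.2 (one_le_rpow (by linarith) hβ)) (rpow_nonneg hk.le β)

theorem rpow_add_monogamyFactor_mul_rpow_le (hk : 0 < k) (hβ : 1 ≤ β) {x y : ℝ} (hx : 0 ≤ x)
    (hy : 0 ≤ y) (hyx : y ≤ k * x) :
    x ^ β + monogamyFactor k β * y ^ β ≤ (x + y) ^ β := by
  have hincr := (convexOn_rpow hβ).map_add_sub_map_le (d := k * y) (Set.mem_Ici.2 hy)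
    (Set.mem_Ici.2 (by positivity)) hyx (by positivity)
  rw [show y + k * y = (1 + k) * y by ring, show k * x + k * y = k * (x + y) by ring,
    mul_rpow (by linarith) hy, mul_rpow hk.le (by linarith), mul_rpow hk.le hx] at hincr
  have hkβ : 0 < k ^ β := rpow_pos_of_pos hk β
  rw [monogamyFactor, div_mul_eq_mul_div, ← le_sub_iff_add_le', div_le_iff₀ hkβ]
  linarith

theorem sum_monogamyFactor_pow_mul_rpow_le (hk : 0 < k) (hβ : 1 ≤ β) (a : ℕ → ℝ) (m n : ℕ)
    (ha : ∀ i ∈ Icc m n, 0 ≤ a i)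
    (htail : ∀ i ∈ Ico m n, ∑ j ∈ Icc (i + 1) n, a j ≤ k * a i) :
    ∑ i ∈ Icc m n, monogamyFactor k β ^ (i - m) * a i ^ β ≤ (∑ i ∈ Icc m n, a i) ^ β := by
  rcases lt_or_ge n m with hnm | hmn
  · simp [Icc_eq_empty_of_lt hnm, zero_rpow (by linarith : β ≠ 0)]
  have ha' : ∀ i ∈ Icc (m + 1) n, 0 ≤ a i := fun i hi ↦
    ha i (Icc_subset_Icc_left m.le_succ hi)
  have ih := sum_monogamyFactor_pow_mul_rpow_le hk hβ a (m + 1) n ha'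
    (fun i hi ↦ htail i (Ico_subset_Ico_left m.le_succ hi))
  have hshift : ∑ i ∈ Icc (m + 1) n, monogamyFactor k β ^ (i - m) * a i ^ β
      = monogamyFactor k β * ∑ i ∈ Icc (m + 1) n, monogamyFactor k β ^ (i - (m + 1)) * a i ^ β := by
    rw [mul_sum]
    refine sum_congr rfl fun i hi ↦ ?_
    rw [← mul_assoc, ← pow_succ', show i - (m + 1) + 1 = i - m by grind]
  have hm := ha m (left_mem_Icc.2 hmn)
  have htail_m : ∑ i ∈ Icc (m + 1) n, a i ≤ k * a m := by
    rcases hmn.lt_or_eq with hlt | rfl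
    · exact htail m (left_mem_Ico.2 hlt)
    · simpa using mul_nonneg hk.le hm
  rw [Icc_eq_cons_Ioc hmn, sum_cons, sum_cons, ← Icc_add_one_left_eq_Ioc, Nat.sub_self, pow_zero,
    one_mul, hshift]
  calc a m ^ β + monogamyFactor k β * ∑ i ∈ Icc (m + 1) n, monogamyFactor k β ^ (i - (m + 1)) * a i ^ β
      ≤ a m ^ β + monogamyFactor k β * (∑ i ∈ Icc (m + 1) n, a i) ^ β := by
        gcongr
        exact monogamyFactor_nonneg hk (by linarith)
    _ ≤ (a m + ∑ i ∈ Icc (m + 1) n, a i) ^ β :=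
        rpow_add_monogamyFactor_mul_rpow_le hk hβ hm (sum_nonneg ha') htail_m
termination_by n + 1 - m
decreasing_by omega

end

theorem stmt_12_general (k β : ℝ) (hk0 : 0 < k) (hβ : 1 ≤ β)
    (N : ℕ) (T : ℝ) (a : ℕ → ℝ)
    (ha : ∀ i ∈ Finset.Icc 1 (N - 1), 0 ≤ a i)
    (hmono : T ≥ ∑ i ∈ Finset.Icc 1 (N - 1), a i)
    (hcond : ∀ i ∈ Finset.Icc 1 (N - 2),
      k * a i ≥ ∑ j ∈ Finset.Icc (i + 1) (N - 1), a j) :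
    T ^ β ≥ ∑ i ∈ Finset.Icc 1 (N - 1),
      (((1 + k) ^ β - 1) / k ^ β) ^ (i - 1) * (a i) ^ β := by
  have hchain := sum_monogamyFactor_pow_mul_rpow_le hk0 hβ a 1 (N - 1) ha fun i hi ↦
    hcond i (by simp only [mem_Ico, mem_Icc] at hi ⊢; omega)
  exact hchain.trans (rpow_le_rpow (sum_nonneg ha) hmono (by linarith))

theorem stmt_12 (k β : ℝ) (hk0 : 0 < k) (hk1 : k ≤ 1) (hβ : 1 ≤ β)
    (N : ℕ) (hN : 2 ≤ N) (T : ℝ) (a : ℕ → ℝ)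
    (hT : 0 ≤ T) (ha : ∀ i ∈ Finset.Icc 1 (N - 1), 0 ≤ a i)
    (hmono : T ≥ ∑ i ∈ Finset.Icc 1 (N - 1), a i)
    (hcond : ∀ i ∈ Finset.Icc 1 (N - 2),
      k * a i ≥ ∑ j ∈ Finset.Icc (i + 1) (N - 1), a j) :
    T ^ β ≥ ∑ i ∈ Finset.Icc 1 (N - 1),
      (((1 + k) ^ β - 1) / k ^ β) ^ (i - 1) * (a i) ^ β :=
  stmt_12_general k β hk0 hβ N T a ha hmono hcond
end

section
/- Let 0 < k ≤ 1 and β ≥ 2 be real numbers, and integers N ≥ 4, 1 ≤ m ≤ N-3. Let c, a₁,…,a_{N-1} ≥ 0 with c² ≥ a₁² + ⋯ + a_{N-1}², and setting c_i² = a_{i+1}² + ⋯ + a_{N-1}², assume k·a_i² ≥ c_i² for i = 1,…,m and a_j² ≤ k·c_j² for j = m+1,…,N-2. Then with h = ((1+k)^{β/2} - 1)/k^{β/2}: c^β ≥ a₁^β + h·a₂^β + ⋯ + h^{m-1}·a_m^β + h^{m+1}·(a_{m+1}^β + ⋯ + a_{N-2}^β) + h^m·a_{N-1}^β. -/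
/-!
Write `p = β / 2` and `T_i = a_{i+1}² + ⋯ + a_{N-1}²` (`tailSqSum`, the paper's `c_i²`). Everything
rests on the two-term inequality `x^p + h y^p ≤ (x + y)^p` for `0 ≤ y ≤ k x`, where
`h = ((1+k)^p - 1)/k^p`: divided by `y^p` it says `(u+1)^p - u^p ≥ (1/k + 1)^p - (1/k)^p` for
`u = x/y ≥ 1/k`, i.e. that the increments of the convex function `u ↦ u^p` grow. Applied to
`T_{i-1} = a_i² + T_i` it peels off `h^{i-1} a_i^β` for `i ≤ m`; with the two terms swapped it peels
off `h^{m+1} a_j^β` for `m < j ≤ N-2`, leaving `h^m T_{N-2}^p = h^m a_{N-1}^β`.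
-/

open Finset

theorem ConvexOn.sub_le_sub_of_le {𝕜 : Type*} [Field 𝕜] [LinearOrder 𝕜] [IsStrictOrderedRing 𝕜]
    {s : Set 𝕜} {f : 𝕜 → 𝕜} (hf : ConvexOn 𝕜 s f) {x y d : 𝕜} (hx : x ∈ s) (hyd : y + d ∈ s)
    (hd : 0 < d) (hxy : x ≤ y) : f (x + d) - f x ≤ f (y + d) - f y := by
  have hs := hf.1.ordConnected
  have hxd : x + d ∈ s := hs.out hx hyd ⟨by linarith, by linarith⟩
  have hy : y ∈ s := hs.out hx hyd ⟨hxy, by linarith⟩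
  -- slope on `[x, x + d]` ≤ slope on `[x, y + d]` ≤ slope on `[y, y + d]`
  have h₁ := hf.secant_mono hx hxd hyd (by linarith) (by linarith) (by linarith)
  have h₂ := hf.secant_mono hyd hx hy (by linarith) (by linarith) hxy
  rw [add_sub_cancel_left] at h₁
  rw [show y - (y + d) = -d by ring, div_neg, ← neg_div, neg_sub, ← neg_div_neg_eq, neg_sub,
    neg_sub] at h₂
  exact (div_le_div_iff_of_pos_right hd).1 (h₁.trans h₂)

namespace Real

theorem sq_rpow_div_two {z : ℝ} (hz : 0 ≤ z) (β : ℝ) : (z ^ 2) ^ (β / 2) = z ^ β := by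
  rw [← rpow_natCast, ← rpow_mul hz]
  congr 1
  push_cast
  ring

theorem add_one_rpow_sub_rpow_le {p x y : ℝ} (hp : 1 ≤ p) (hx : 0 ≤ x) (hxy : x ≤ y) :
    (x + 1) ^ p - x ^ p ≤ (y + 1) ^ p - y ^ p :=
  (convexOn_rpow hp).sub_le_sub_of_le hx (by simp only [Set.mem_Ici]; linarith) one_pos hxy

theorem add_rpow_sub_rpow_eq_mul {p x y : ℝ} (hx : 0 ≤ x) (hy : 0 < y) :
    (x + y) ^ p - x ^ p = y ^ p * ((x / y + 1) ^ p - (x / y) ^ p) := by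
  have hxy : 0 ≤ x / y := div_nonneg hx hy.le
  rw [mul_sub, ← mul_rpow hy.le (by positivity), ← mul_rpow hy.le hxy]
  congr 2 <;> field_simp

theorem rpow_add_mul_rpow_le_add_rpow {p k x y : ℝ} (hp : 1 ≤ p) (hk : 0 < k) (hx : 0 ≤ x)
    (hy : 0 ≤ y) (hyx : y ≤ k * x) :
    x ^ p + ((1 + k) ^ p - 1) / k ^ p * y ^ p ≤ (x + y) ^ p := by
  rcases hy.eq_or_lt with rfl | hy
  · simp [zero_rpow (by linarith : p ≠ 0)]
  have hweight : ((1 + k) ^ p - 1) / k ^ p = (1 / k + 1) ^ p - (1 / k) ^ p := by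
    have h := add_rpow_sub_rpow_eq_mul (p := p) zero_le_one hk
    rw [one_rpow] at h
    rw [div_eq_iff (rpow_pos_of_pos hk p).ne', h, mul_comm]
  have hratio : 1 / k ≤ x / y := by
    rw [div_le_div_iff₀ hk hy]; linarith
  have hgrowth := add_one_rpow_sub_rpow_le hp (by positivity) hratio
  rw [hweight]
  have := mul_le_mul_of_nonneg_left hgrowth (rpow_nonneg hy.le p)
  linarith [add_rpow_sub_rpow_eq_mul (p := p) hx hy]

theorem add_rpow_le_add_rpow_of_le_mul {p k x y : ℝ} (hp : 1 ≤ p) (hk : 0 < k) (hx : 0 ≤ x)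
    (hy : 0 ≤ y) (hxy : x ≤ k * y) :
    y ^ p + ((1 + k) ^ p - 1) / k ^ p * x ^ p ≤ (x + y) ^ p :=
  add_comm x y ▸ rpow_add_mul_rpow_le_add_rpow hp hk hy hx hxy

end Real

theorem sum_Icc_pow_mul_add_pow_mul_le {h : ℝ} (hh : 0 ≤ h) (x w : ℕ → ℝ) {m : ℕ}
    (hstep : ∀ i < m, x (i + 1) + h * w (i + 1) ≤ w i) :
    ∑ i ∈ Icc 1 m, h ^ (i - 1) * x i + h ^ m * w m ≤ w 0 := by
  induction m with
  | zero => simp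
  | succ m ih =>
    have hlast := mul_le_mul_of_nonneg_left (hstep m m.lt_succ_self) (pow_nonneg hh m)
    rw [mul_add, ← mul_assoc, ← pow_succ] at hlast
    rw [sum_Icc_succ_top (by omega), Nat.add_sub_cancel]
    linarith [ih fun i hi => hstep i (by omega)]

theorem sum_Icc_add_le_of_add_le (x w : ℕ → ℝ) {m n : ℕ} (hmn : m ≤ n)
    (hstep : ∀ i, m ≤ i → i < n → w (i + 1) + x (i + 1) ≤ w i) :
    ∑ j ∈ Icc (m + 1) n, x j + w n ≤ w m := by
  induction n, hmn using Nat.le_induction with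
  | base => simp
  | succ n hmn ih =>
    rw [sum_Icc_succ_top (by omega)]
    linarith [ih fun i hi hin => hstep i hi (by omega), hstep n hmn n.lt_succ_self]

def tailSqSum (a : ℕ → ℝ) (n i : ℕ) : ℝ := ∑ j ∈ Icc (i + 1) n, a j ^ 2

theorem tailSqSum_nonneg (a : ℕ → ℝ) (n i : ℕ) : 0 ≤ tailSqSum a n i :=
  sum_nonneg fun j _ => sq_nonneg (a j)

theorem tailSqSum_eq_sq_add {a : ℕ → ℝ} {n i : ℕ} (hi : i + 1 ≤ n) :
    tailSqSum a n i = a (i + 1) ^ 2 + tailSqSum a n (i + 1) := by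
  rw [tailSqSum, ← insert_Icc_add_one_left_eq_Icc hi, sum_insert (by simp)]
  rfl

theorem tailSqSum_of_succ_eq {a : ℕ → ℝ} {n i : ℕ} (hi : i + 1 = n) : tailSqSum a n i = a n ^ 2 := by
  rw [tailSqSum, hi, Icc_self, sum_singleton]

theorem stmt_16_general (k β : ℝ) (hk0 : 0 < k) (hβ : 2 ≤ β)
    (N m : ℕ) (hN : 4 ≤ N) (hm2 : m ≤ N - 3)
    (c : ℝ) (a : ℕ → ℝ)
    (hc : 0 ≤ c) (ha : ∀ i ∈ Finset.Icc 1 (N - 1), 0 ≤ a i)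
    (hmono : c ^ 2 ≥ ∑ i ∈ Finset.Icc 1 (N - 1), (a i) ^ 2)
    (hcond1 : ∀ i ∈ Finset.Icc 1 m,
      k * (a i) ^ 2 ≥ ∑ j ∈ Finset.Icc (i + 1) (N - 1), (a j) ^ 2)
    (hcond2 : ∀ j ∈ Finset.Icc (m + 1) (N - 2),
      (a j) ^ 2 ≤ k * ∑ l ∈ Finset.Icc (j + 1) (N - 1), (a l) ^ 2) :
    c ^ β ≥
      (∑ i ∈ Finset.Icc 1 m,
        (((1 + k) ^ (β / 2) - 1) / k ^ (β / 2)) ^ (i - 1) * (a i) ^ β)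
      + (((1 + k) ^ (β / 2) - 1) / k ^ (β / 2)) ^ (m + 1) *
          (∑ j ∈ Finset.Icc (m + 1) (N - 2), (a j) ^ β)
      + (((1 + k) ^ (β / 2) - 1) / k ^ (β / 2)) ^ m * (a (N - 1)) ^ β := by
  set h := ((1 + k) ^ (β / 2) - 1) / k ^ (β / 2)
  have hp : 1 ≤ β / 2 := by linarith
  have hh : 0 ≤ h :=
    div_nonneg (sub_nonneg.2 (Real.one_le_rpow (by linarith) (by linarith))) (by positivity)
  have head : ∑ i ∈ Icc 1 m, h ^ (i - 1) * a i ^ β + h ^ m * tailSqSum a (N - 1) m ^ (β / 2)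
      ≤ tailSqSum a (N - 1) 0 ^ (β / 2) := by
    refine sum_Icc_pow_mul_add_pow_mul_le hh _ (tailSqSum a (N - 1) · ^ (β / 2)) fun i hi => ?_
    rw [tailSqSum_eq_sq_add (i := i) (by omega), ← Real.sq_rpow_div_two (ha _ (by simp; omega))]
    exact Real.rpow_add_mul_rpow_le_add_rpow hp hk0 (sq_nonneg _) (tailSqSum_nonneg _ _ _)
      (hcond1 (i + 1) (by simp; omega))
  have tail : ∑ j ∈ Icc (m + 1) (N - 2), h * a j ^ β + tailSqSum a (N - 1) (N - 2) ^ (β / 2)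
      ≤ tailSqSum a (N - 1) m ^ (β / 2) := by
    refine sum_Icc_add_le_of_add_le _ (tailSqSum a (N - 1) · ^ (β / 2)) (by omega)
      fun i hmi hi => ?_
    rw [tailSqSum_eq_sq_add (i := i) (by omega), ← Real.sq_rpow_div_two (ha _ (by simp; omega))]
    exact Real.add_rpow_le_add_rpow_of_le_mul hp hk0 (sq_nonneg _) (tailSqSum_nonneg _ _ _)
      (hcond2 (i + 1) (by simp; omega))
  have hfirst : tailSqSum a (N - 1) 0 ^ (β / 2) ≤ c ^ β :=
    Real.sq_rpow_div_two hc β ▸ Real.rpow_le_rpow (tailSqSum_nonneg _ _ _) hmono (by linarith)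
  rw [← mul_sum, tailSqSum_of_succ_eq (by omega),
    Real.sq_rpow_div_two (ha _ (by simp; omega))] at tail
  have htail := mul_le_mul_of_nonneg_left tail (pow_nonneg hh m)
  rw [mul_add, ← mul_assoc, ← pow_succ] at htail
  linarith

theorem stmt_16 (k β : ℝ) (hk0 : 0 < k) (hk1 : k ≤ 1) (hβ : 2 ≤ β)
    (N m : ℕ) (hN : 4 ≤ N) (hm1 : 1 ≤ m) (hm2 : m ≤ N - 3)
    (c : ℝ) (a : ℕ → ℝ)
    (hc : 0 ≤ c) (ha : ∀ i ∈ Finset.Icc 1 (N - 1), 0 ≤ a i)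
    (hmono : c ^ 2 ≥ ∑ i ∈ Finset.Icc 1 (N - 1), (a i) ^ 2)
    (hcond1 : ∀ i ∈ Finset.Icc 1 m,
      k * (a i) ^ 2 ≥ ∑ j ∈ Finset.Icc (i + 1) (N - 1), (a j) ^ 2)
    (hcond2 : ∀ j ∈ Finset.Icc (m + 1) (N - 2),
      (a j) ^ 2 ≤ k * ∑ l ∈ Finset.Icc (j + 1) (N - 1), (a l) ^ 2) :
    c ^ β ≥
      (∑ i ∈ Finset.Icc 1 m,
        (((1 + k) ^ (β / 2) - 1) / k ^ (β / 2)) ^ (i - 1) * (a i) ^ β)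
      + (((1 + k) ^ (β / 2) - 1) / k ^ (β / 2)) ^ (m + 1) *
          (∑ j ∈ Finset.Icc (m + 1) (N - 2), (a j) ^ β)
      + (((1 + k) ^ (β / 2) - 1) / k ^ (β / 2)) ^ m * (a (N - 1)) ^ β :=
  stmt_16_general k β hk0 hβ N m hN hm2 c a hc ha hmono hcond1 hcond2
end
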